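/- Let D ≥ 0 and C_vol > 0 be real constants, let (Γ, d) be a countable D-regular metric space with constant C_vol, and fix x₀ ∈ Γ. Let F : [0,∞) → (0,∞) be bounded, and let ν ≥ 0 and ε > 0 be such that sup_{m ≥ 0} (1+m)^{2D+2+ν+2ε} F(m) < ∞. Then sup_{k ≥ 0} (1+k)^{ν+ε} ∑_{x ∈ Γ, d(x,x₀) > k/2} (1 + d(x,x₀)) · (1 + k/8)^D · F( (¾ d(x,x₀) − (k+1)/4)_+ ) < ∞. -/

import Mathlib

open Real

/-- Core summability lemma: on a `D`-regular space, `(1 + dist x x₀)^(-(D+1+ε))`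
is summable, with an explicit bound on any finite partial sum. -/
lemma dreg_summable_aux
    {Γ : Type*} [MetricSpace Γ]
    (D Cvol : ℝ) (hD : 0 ≤ D) (hCvol : 0 < Cvol)
    (hfin : ∀ (x : Γ) (r : ℝ), 0 < r → (Metric.closedBall x r).Finite)
    (hcard : ∀ (x : Γ) (r : ℝ), 0 < r →
      ((Metric.closedBall x r).ncard : ℝ) ≤ Cvol * (1 + r) ^ D)
    (x₀ : Γ) (ε : ℝ) (hε : 0 < ε) :
    ∃ S : ℝ, Summable (fun x : Γ => (1 + dist x x₀) ^ (-(D + 1 + ε))) ∧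
      ∑' x : Γ, (1 + dist x x₀) ^ (-(D + 1 + ε)) ≤ S := by
  classical
  set q : ℝ := D + 1 + ε with hq
  have hq0 : 0 < q := by positivity
  set h : ℕ → ℝ := fun n => Cvol * (2 + (n : ℝ)) ^ D * (1 + (n : ℝ)) ^ (-q) with hh
  have hhnonneg : ∀ n, 0 ≤ h n := by
    intro n
    have h1 : (0:ℝ) < 2 + (n : ℝ) := by positivity
    have h2 : (0:ℝ) < 1 + (n : ℝ) := by positivity
    have := Real.rpow_pos_of_pos h1 D
    have := Real.rpow_pos_of_pos h2 (-q)
    positivity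
  -- summability of h
  have hsumh : Summable h := by
    have hbase : Summable (fun n : ℕ => (1 + (n : ℝ)) ^ (-(1 + ε))) := by
      have h1 : Summable (fun n : ℕ => 1 / ((n : ℝ)) ^ (1 + ε)) :=
        Real.summable_one_div_nat_rpow.mpr (by linarith)
      have h2 := (summable_nat_add_iff 1).mpr h1
      apply h2.congr
      intro n
      have hn : (0:ℝ) < 1 + (n : ℝ) := by positivity
      rw [Real.rpow_neg hn.le]
      push_cast
      rw [one_div, add_comm (n:ℝ) 1]
    apply Summable.of_nonneg_of_le hhnonneg _ (hbase.mul_left (Cvol * 2 ^ D))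
    intro n
    have h1 : (0:ℝ) < 1 + (n : ℝ) := by positivity
    have h2 : (2 + (n : ℝ)) ^ D ≤ 2 ^ D * (1 + (n : ℝ)) ^ D := by
      rw [← Real.mul_rpow (by norm_num) h1.le]
      apply Real.rpow_le_rpow (by positivity) (by linarith) hD
    have h3 : (1 + (n : ℝ)) ^ D * (1 + (n : ℝ)) ^ (-q) = (1 + (n : ℝ)) ^ (-(1 + ε)) := by
      rw [← Real.rpow_add h1, hq]
      ring_nf
    calc h n ≤ Cvol * (2 ^ D * (1 + (n : ℝ)) ^ D) * (1 + (n : ℝ)) ^ (-q) := by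
          have := Real.rpow_pos_of_pos h1 (-q)
          apply mul_le_mul_of_nonneg_right (mul_le_mul_of_nonneg_left h2 hCvol.le) this.le
      _ = Cvol * 2 ^ D * ((1 + (n : ℝ)) ^ D * (1 + (n : ℝ)) ^ (-q)) := by ring
      _ = Cvol * 2 ^ D * (1 + (n : ℝ)) ^ (-(1 + ε)) := by rw [h3]
  refine ⟨∑' n, h n, ?_⟩
  set g : Γ → ℝ := fun x => (1 + dist x x₀) ^ (-q) with hg
  have hgnonneg : ∀ x, 0 ≤ g x := fun x =>
    (Real.rpow_pos_of_pos (by have := dist_nonneg (x := x) (y := x₀); linarith) _).le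
  -- key bound on finite sums
  have key : ∀ s : Finset Γ, ∑ x ∈ s, g x ≤ ∑' n, h n := by
    intro s
    set φ : Γ → ℕ := fun x => ⌊dist x x₀⌋₊ with hφ
    have hfib := Finset.sum_fiberwise_eq_sum_filter s (s.image φ) φ g
    have himg : ∀ x ∈ s, φ x ∈ s.image φ := fun x hx => Finset.mem_image_of_mem φ hx
    have heq : ∑ n ∈ s.image φ, ∑ x ∈ s.filter (fun x => φ x = n), g x = ∑ x ∈ s, g x := by
      rw [hfib, Finset.filter_true_of_mem]
      intro x hx; exact himg x hx
    rw [← heq]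
    have hinner : ∀ n ∈ s.image φ,
        ∑ x ∈ s.filter (fun x => φ x = n), g x ≤ h n := by
      intro n _
      set t := s.filter (fun x => φ x = n) with ht
      have hmem : ∀ x ∈ t, g x ≤ (1 + (n : ℝ)) ^ (-q) := by
        intro x hx
        have hx' := (Finset.mem_filter.mp hx).2
        have hd0 : (0:ℝ) ≤ dist x x₀ := dist_nonneg
        have hnd : (n : ℝ) ≤ dist x x₀ := by
          rw [← hx']; exact Nat.floor_le hd0
        exact Real.rpow_le_rpow_of_nonpos (by positivity) (by linarith) (by linarith)
      have hcardt : (t.card : ℝ) ≤ Cvol * (2 + (n : ℝ)) ^ D := by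
        have hr : (0:ℝ) < (n : ℝ) + 1 := by positivity
        have hsub : t ⊆ (hfin x₀ ((n : ℝ) + 1) hr).toFinset := by
          intro x hx
          rw [Set.Finite.mem_toFinset]
          have hx' := (Finset.mem_filter.mp hx).2
          have hd0 : (0:ℝ) ≤ dist x x₀ := dist_nonneg
          have : dist x x₀ < (n : ℝ) + 1 := by
            rw [← hx']; exact Nat.lt_floor_add_one _
          exact Metric.mem_closedBall.mpr this.le
        have h1 : (t.card : ℝ) ≤ ((hfin x₀ ((n : ℝ) + 1) hr).toFinset.card : ℝ) := by
          exact_mod_cast Finset.card_le_card hsub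
        have h2 : ((hfin x₀ ((n : ℝ) + 1) hr).toFinset.card : ℝ)
            = ((Metric.closedBall x₀ ((n : ℝ) + 1)).ncard : ℝ) := by
          rw [Set.ncard_eq_toFinset_card _ (hfin x₀ ((n : ℝ) + 1) hr)]
        have h3 := hcard x₀ ((n : ℝ) + 1) hr
        have : (1 + ((n : ℝ) + 1)) = 2 + (n : ℝ) := by ring
        rw [this] at h3
        linarith [h1, h2 ▸ h1, h3]
      calc ∑ x ∈ t, g x ≤ ∑ _x ∈ t, (1 + (n : ℝ)) ^ (-q) := Finset.sum_le_sum hmem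
        _ = (t.card : ℝ) * (1 + (n : ℝ)) ^ (-q) := by
            rw [Finset.sum_const, nsmul_eq_mul]
        _ ≤ Cvol * (2 + (n : ℝ)) ^ D * (1 + (n : ℝ)) ^ (-q) := by
            apply mul_le_mul_of_nonneg_right hcardt
            exact (Real.rpow_pos_of_pos (by positivity) _).le
    calc ∑ n ∈ s.image φ, ∑ x ∈ s.filter (fun x => φ x = n), g x
        ≤ ∑ n ∈ s.image φ, h n := Finset.sum_le_sum hinner
      _ ≤ ∑' n, h n := Summable.sum_le_tsum _ (fun n _ => hhnonneg n) hsumh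
  have hsumg : Summable g := summable_of_sum_le hgnonneg key
  exact ⟨hsumg, Summable.tsum_le_of_sum_le hsumg key⟩

/-- **Bound on the Lieb-Robinson term in the Cauchy estimate.**
Let `(Γ, d)` be a countable `D`-regular metric space with constant `C_vol`
(`D ≥ 0`, `C_vol > 0`), fix `x₀ ∈ Γ`.  Let `F : [0,∞) → (0,∞)` be bounded, and
let `ν ≥ 0`, `ε > 0` be such that `sup_{m ≥ 0} (1+m)^(2D+2+ν+2ε) * F m < ∞`
(with bound `M`).  Then
`sup_{k ≥ 0} (1+k)^(ν+ε) * ∑_{x : d(x,x₀) > k/2} (1 + d(x,x₀)) * (1 + k/8)^D *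
F ((¾ d(x,x₀) − (k+1)/4)₊) < ∞` (and in particular each of these sums is a
convergent sum). -/
theorem lieb_robinson_term_estimate
    {Γ : Type*} [MetricSpace Γ] [Countable Γ]
    (D Cvol : ℝ) (hD : 0 ≤ D) (hCvol : 0 < Cvol)
    (hfin : ∀ (x : Γ) (r : ℝ), 0 < r → (Metric.closedBall x r).Finite)
    (hcard : ∀ (x : Γ) (r : ℝ), 0 < r →
      ((Metric.closedBall x r).ncard : ℝ) ≤ Cvol * (1 + r) ^ D)
    (x₀ : Γ)
    (F : ℝ → ℝ) (hFpos : ∀ r ≥ (0:ℝ), 0 < F r)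
    (hFbdd : ∃ B : ℝ, ∀ r ≥ (0:ℝ), F r ≤ B)
    (ν ε M : ℝ) (hν : 0 ≤ ν) (hε : 0 < ε)
    (hM : ∀ m ≥ (0:ℝ), (1 + m) ^ (2 * D + 2 + ν + 2 * ε) * F m ≤ M) :
    (∀ k ≥ (0:ℝ),
      Summable (fun x : {x : Γ // k / 2 < dist x x₀} =>
        (1 + dist x.1 x₀) * (1 + k / 8) ^ D *
          F (max (3 / 4 * dist x.1 x₀ - (k + 1) / 4) 0))) ∧
    ∃ C : ℝ, ∀ k ≥ (0:ℝ),
      (1 + k) ^ (ν + ε) *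
        ∑' x : {x : Γ // k / 2 < dist x x₀},
          (1 + dist x.1 x₀) * (1 + k / 8) ^ D *
            F (max (3 / 4 * dist x.1 x₀ - (k + 1) / 4) 0)
      ≤ C := by
  classical
  set p : ℝ := 2 * D + 2 + ν + 2 * ε with hp
  set q : ℝ := D + 1 + ε with hq
  obtain ⟨S, hsumg, htsumg⟩ := dreg_summable_aux D Cvol hD hCvol hfin hcard x₀ ε hε
  set g : Γ → ℝ := fun x => (1 + dist x x₀) ^ (-q) with hg
  have hgnonneg : ∀ x, 0 ≤ g x := fun x =>
    (Real.rpow_pos_of_pos (by have := dist_nonneg (x := x) (y := x₀); linarith) _).le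
  set K : ℝ := 2 ^ (ν + ε) * 4 ^ p * M with hK
  have hM0 : 0 < M := by
    have h0 := hM 0 le_rfl
    have hF0 := hFpos 0 le_rfl
    have : (1 + (0:ℝ)) ^ p = 1 := by norm_num
    nlinarith [this]
  have hK0 : 0 < K := by
    have := Real.rpow_pos_of_pos (show (0:ℝ) < 2 by norm_num) (ν + ε)
    have := Real.rpow_pos_of_pos (show (0:ℝ) < 4 by norm_num) p
    positivity
  -- the key pointwise bound
  have key : ∀ k ≥ (0:ℝ), ∀ x : Γ, k / 2 < dist x x₀ →
      (1 + k) ^ (ν + ε) * ((1 + dist x x₀) * (1 + k / 8) ^ D *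
        F (max (3 / 4 * dist x x₀ - (k + 1) / 4) 0)) ≤ K * g x := by
    intro k hk x hx
    set d : ℝ := dist x x₀ with hd
    have hd0 : (0:ℝ) ≤ d := dist_nonneg
    have hkd : k < 2 * d := by linarith
    set m : ℝ := max (3 / 4 * d - (k + 1) / 4) 0 with hm
    have hm0 : (0:ℝ) ≤ m := le_max_right _ _
    have h1m : (1 + d) / 4 ≤ 1 + m := by
      rcases le_or_gt 0 (3 / 4 * d - (k + 1) / 4) with h | h
      · rw [hm, max_eq_left h]; linarith
      · rw [hm, max_eq_right h.le]; linarith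
    have h1m0 : (0:ℝ) < 1 + m := by linarith
    have h1d0 : (0:ℝ) < 1 + d := by linarith
    -- F m ≤ M * (1+m)^(-p)
    have hFm : F m ≤ M * (1 + m) ^ (-p) := by
      have h1 := hM m hm0
      have h2 : (0:ℝ) < (1 + m) ^ p := Real.rpow_pos_of_pos h1m0 p
      have h3 : F m ≤ M / (1 + m) ^ p := (le_div_iff₀ h2).mpr (by linarith)
      rw [Real.rpow_neg h1m0.le, ← div_eq_mul_inv]
      exact h3
    have hFm' : M * (1 + m) ^ (-p) ≤ M * (4 ^ p * (1 + d) ^ (-p)) := by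
      apply mul_le_mul_of_nonneg_left _ hM0.le
      have h3 : (1 + m) ^ (-p) ≤ ((1 + d) / 4) ^ (-p) :=
        Real.rpow_le_rpow_of_nonpos (by linarith) h1m (by rw [hp]; linarith)
      have h4 : ((1 + d) / 4) ^ (-p) = 4 ^ p * (1 + d) ^ (-p) := by
        rw [Real.div_rpow h1d0.le (by norm_num), Real.rpow_neg (by norm_num : (0:ℝ) ≤ 4),
          div_eq_mul_inv, inv_inv]
        ring
      linarith [h3, h4 ▸ h3]
    have hF0m : 0 < F m := hFpos m hm0
    -- (1+k/8)^D ≤ (1+d)^D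
    have hkd8 : (1 + k / 8) ^ D ≤ (1 + d) ^ D :=
      Real.rpow_le_rpow (by linarith) (by linarith) hD
    -- (1+k)^(ν+ε) ≤ 2^(ν+ε) (1+d)^(ν+ε)
    have hkν : (1 + k) ^ (ν + ε) ≤ 2 ^ (ν + ε) * (1 + d) ^ (ν + ε) := by
      rw [← Real.mul_rpow (by norm_num) h1d0.le]
      exact Real.rpow_le_rpow (by linarith) (by linarith) (by linarith)
    have hkν0 : (0:ℝ) ≤ (1 + k) ^ (ν + ε) :=
      (Real.rpow_pos_of_pos (by linarith) _).le
    have hkd80 : (0:ℝ) ≤ (1 + k / 8) ^ D :=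
      (Real.rpow_pos_of_pos (by linarith) _).le
    have h1dD0 : (0:ℝ) ≤ (1 + d) ^ D := (Real.rpow_pos_of_pos h1d0 _).le
    have h1dν0 : (0:ℝ) ≤ (1 + d) ^ (ν + ε) := (Real.rpow_pos_of_pos h1d0 _).le
    have step1 : (1 + k) ^ (ν + ε) * ((1 + d) * (1 + k / 8) ^ D * F m)
        ≤ (2 ^ (ν + ε) * (1 + d) ^ (ν + ε)) *
          ((1 + d) * (1 + d) ^ D * (M * (4 ^ p * (1 + d) ^ (-p)))) := by
      apply mul_le_mul hkν _ _ (by positivity)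
      · apply mul_le_mul _ (hFm.trans hFm') hF0m.le (by positivity)
        exact mul_le_mul_of_nonneg_left hkd8 h1d0.le
      · positivity
    have step2 : (2 ^ (ν + ε) * (1 + d) ^ (ν + ε)) *
          ((1 + d) * (1 + d) ^ D * (M * (4 ^ p * (1 + d) ^ (-p)))) = K * g x := by
      rw [hK, hg]
      have e1 : (1 + d) ^ (ν + ε) * ((1 + d) * (1 + d) ^ D * (1 + d) ^ (-p))
          = (1 + d) ^ (-q) := by
        have c1 : (1 + d) * (1 + d) ^ D = (1 + d) ^ (1 + D) := by
          rw [Real.rpow_add h1d0, Real.rpow_one]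
        rw [c1, ← Real.rpow_add h1d0, ← Real.rpow_add h1d0]
        congr 1
        rw [hp, hq]; ring
      calc (2 ^ (ν + ε) * (1 + d) ^ (ν + ε)) *
            ((1 + d) * (1 + d) ^ D * (M * (4 ^ p * (1 + d) ^ (-p))))
          = 2 ^ (ν + ε) * 4 ^ p * M *
            ((1 + d) ^ (ν + ε) * ((1 + d) * (1 + d) ^ D * (1 + d) ^ (-p))) := by ring
        _ = 2 ^ (ν + ε) * 4 ^ p * M * (1 + d) ^ (-q) := by rw [e1]
    linarith [step1, step2 ▸ step1]
  -- summability on the subtype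
  have hsummable : ∀ k ≥ (0:ℝ),
      Summable (fun x : {x : Γ // k / 2 < dist x x₀} =>
        (1 + dist x.1 x₀) * (1 + k / 8) ^ D *
          F (max (3 / 4 * dist x.1 x₀ - (k + 1) / 4) 0)) := by
    intro k hk
    have h1k : (1:ℝ) ≤ (1 + k) ^ (ν + ε) :=
      Real.one_le_rpow (by linarith) (by linarith)
    apply Summable.of_nonneg_of_le _ _ ((hsumg.subtype _).mul_left K)
    · intro x
      have hd0 : (0:ℝ) ≤ dist x.1 x₀ := dist_nonneg
      have := hFpos (max (3 / 4 * dist x.1 x₀ - (k + 1) / 4) 0) (le_max_right _ _)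
      have h1 : (0:ℝ) ≤ (1 + k / 8) ^ D :=
        (Real.rpow_pos_of_pos (by linarith) _).le
      positivity
    · intro x
      have hb := key k hk x.1 x.2
      have hT0 : (0:ℝ) ≤ (1 + dist x.1 x₀) * (1 + k / 8) ^ D *
          F (max (3 / 4 * dist x.1 x₀ - (k + 1) / 4) 0) := by
        have hd0 : (0:ℝ) ≤ dist x.1 x₀ := dist_nonneg
        have := hFpos (max (3 / 4 * dist x.1 x₀ - (k + 1) / 4) 0) (le_max_right _ _)
        have h1 : (0:ℝ) ≤ (1 + k / 8) ^ D :=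
          (Real.rpow_pos_of_pos (by linarith) _).le
        positivity
      calc (1 + dist x.1 x₀) * (1 + k / 8) ^ D *
            F (max (3 / 4 * dist x.1 x₀ - (k + 1) / 4) 0)
          ≤ (1 + k) ^ (ν + ε) * ((1 + dist x.1 x₀) * (1 + k / 8) ^ D *
            F (max (3 / 4 * dist x.1 x₀ - (k + 1) / 4) 0)) := by
            nlinarith [hT0, h1k]
        _ ≤ K * g x.1 := hb
  refine ⟨hsummable, K * S, ?_⟩
  intro k hk
  have hsT := hsummable k hk
  have hsKg : Summable (fun x : {x : Γ // k / 2 < dist x x₀} => K * g x.1) :=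
    (hsumg.subtype _).mul_left K
  rw [← tsum_mul_left]
  have h1 : ∑' x : {x : Γ // k / 2 < dist x x₀},
      (1 + k) ^ (ν + ε) * ((1 + dist x.1 x₀) * (1 + k / 8) ^ D *
        F (max (3 / 4 * dist x.1 x₀ - (k + 1) / 4) 0))
      ≤ ∑' x : {x : Γ // k / 2 < dist x x₀}, K * g x.1 := by
    apply Summable.tsum_le_tsum _ (hsT.mul_left _) hsKg
    intro x
    exact key k hk x.1 x.2
  have h2 : ∑' x : {x : Γ // k / 2 < dist x x₀}, K * g x.1 ≤ K * S := by
    rw [tsum_mul_left]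
    apply mul_le_mul_of_nonneg_left _ hK0.le
    calc ∑' x : {x : Γ // k / 2 < dist x x₀}, g x.1
        ≤ ∑' x : Γ, g x := by
          have := Summable.tsum_subtype_le g {x : Γ | k / 2 < dist x x₀} hgnonneg hsumg
          exact this
      _ ≤ S := htsumg
  linarith
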